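/- arXiv:2311.08918 — 5 statements merged into one kernel-verified Lean document; each statement's English description precedes it below -/
import Mathlib

section
/- For all parameters c ∈ [0,√2) and κ ∈ (0,1/2), and for all y ∈ (0, 1−c²/2), the function F(y) = 2√κ·atan(√κ·√((2−c²−2y)/(1−2κ+2κy))) + 2√((1−2κ)/(2−c²))·atanh(√((1−2κ)(2−c²−2y)/((2−c²)(1−2κ+2κy)))) is well-defined (all square roots have nonnegative arguments and the atanh argument lies in (−1,1)) and its derivative equals F'(y) = −(1/y)·√((1−2κ+2κy)/(2−c²−2y)). -/
/-!
With `a = 2 - c²`, `b = 1 - 2κ` and `t(z) = √((a - 2z) / (b + 2κz))`, the artanh argument is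
`√(b/a) · t`, so `F = G ∘ t` for `G t = 2√κ arctan (√κ t) + 2q artanh (q t)`, `q = √(b/a)`.
Both `1 + κt²` and `1 - q²t²` are multiples of `b + κa`, which cancels against the same factor
in the derivative of `t²`, and the chain rule leaves `F'(y) = -1 / (y t(y))`.
-/

open Real

noncomputable def artanh (x : ℝ) : ℝ := (1/2) * Real.log ((1 + x) / (1 - x))

theorem hasDerivAt_artanh {x : ℝ} (hx : x ∈ Set.Ioo (-1) 1) :
    HasDerivAt _root_.artanh (1 / (1 - x ^ 2)) x := by
  obtain ⟨hx₁, hx₂⟩ := hx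
  have hplus : 0 < 1 + x := by linarith
  have hminus : 0 < 1 - x := by linarith
  have hratio := ((hasDerivAt_id' x).const_add 1).fun_div ((hasDerivAt_id' x).const_sub 1)
    hminus.ne'
  refine ((hratio.log (div_pos hplus hminus).ne').const_mul (1 / 2)).congr_deriv ?_
  have hfactor : 1 - x ^ 2 = (1 + x) * (1 - x) := by ring
  rw [hfactor]
  field_simp
  ring

theorem hasDerivAt_arctan_add_artanh {k q t : ℝ} (hqt : q * t ∈ Set.Ioo (-1) 1) :
    HasDerivAt (fun s => 2 * k * arctan (k * s) + 2 * q * _root_.artanh (q * s))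
      (2 * k ^ 2 / (1 + k ^ 2 * t ^ 2) + 2 * q ^ 2 / (1 - q ^ 2 * t ^ 2)) t := by
  have harctan := (((hasDerivAt_id' t).const_mul k).arctan).const_mul (2 * k)
  have hartanh :=
    ((hasDerivAt_artanh hqt).comp t ((hasDerivAt_id' t).const_mul q)).const_mul (2 * q)
  refine (harctan.fun_add hartanh).congr_deriv ?_
  ring

theorem hasDerivAt_sqrt_div_linear {a b κ y : ℝ} (hN : 0 < a - 2 * y) (hD : 0 < b + 2 * κ * y) :
    HasDerivAt (fun z => √((a - 2 * z) / (b + 2 * κ * z)))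
      (-(b + κ * a) / (b + 2 * κ * y) ^ 2 / √((a - 2 * y) / (b + 2 * κ * y))) y := by
  have hN' : HasDerivAt (fun z : ℝ => a - 2 * z) (-2) y := by
    simpa using ((hasDerivAt_id' y).const_mul 2).const_sub a
  have hD' : HasDerivAt (fun z : ℝ => b + 2 * κ * z) (2 * κ) y := by
    simpa using ((hasDerivAt_id' y).const_mul (2 * κ)).const_add b
  refine ((hN'.fun_div hD' hD.ne').sqrt (div_pos hN hD).ne').congr_deriv ?_
  field_simp
  ring

theorem sqrt_mul_div_mul_linear_mem_Ioo {a b κ y : ℝ} (ha : 0 < a) (hb : 0 < b) (hκ : 0 ≤ κ)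
    (hy : 0 < y) : √(b * (a - 2 * y) / (a * (b + 2 * κ * y))) ∈ Set.Ioo (-1) 1 := by
  refine ⟨neg_one_lt_zero.trans_le (sqrt_nonneg _), (sqrt_lt' one_pos).mpr ?_⟩
  rw [one_pow, div_lt_one (by positivity)]
  nlinarith [mul_nonneg (mul_nonneg hκ hy.le) ha.le]

theorem hasDerivAt_arctan_sqrt_add_artanh_sqrt {a b κ y : ℝ} (ha : 0 < a) (hb : 0 < b)
    (hκ : 0 ≤ κ) (hy : 0 < y) (hN : 0 < a - 2 * y) :
    HasDerivAt (fun z => 2 * √κ * arctan (√κ * √((a - 2 * z) / (b + 2 * κ * z))) +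
        2 * √(b / a) * _root_.artanh (√(b * (a - 2 * z) / (a * (b + 2 * κ * z)))))
      (-(1 / y) * √((b + 2 * κ * y) / (a - 2 * y))) y := by
  have hD : 0 < b + 2 * κ * y := by positivity
  have hsplit (z : ℝ) : √(b * (a - 2 * z) / (a * (b + 2 * κ * z))) =
      √(b / a) * √((a - 2 * z) / (b + 2 * κ * z)) := by
    rw [mul_div_mul_comm, sqrt_mul (div_pos hb ha).le]
  have hqt := hsplit y ▸ sqrt_mul_div_mul_linear_mem_Ioo ha hb hκ hy
  simp only [hsplit]
  refine ((hasDerivAt_arctan_add_artanh hqt).comp y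
    (hasDerivAt_sqrt_div_linear hN hD)).congr_deriv ?_
  have hinv : √((b + 2 * κ * y) / (a - 2 * y)) = (√((a - 2 * y) / (b + 2 * κ * y)))⁻¹ := by
    rw [← sqrt_inv, inv_div]
  have harctan_den : 1 + κ * ((a - 2 * y) / (b + 2 * κ * y)) = (b + κ * a) / (b + 2 * κ * y) := by
    field_simp
    ring
  have hartanh_den : 1 - b / a * ((a - 2 * y) / (b + 2 * κ * y)) =
      2 * y * (b + κ * a) / (a * (b + 2 * κ * y)) := by
    field_simp
    ring
  rw [hinv, sq_sqrt hκ, sq_sqrt (div_pos hb ha).le, sq_sqrt (div_pos hN hD).le,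
    harctan_den, hartanh_den]
  field_simp
  ring

theorem stmt_0_general (c κ : ℝ)
    (hκ0 : 0 < κ) (hκ : κ < 1/2) (y : ℝ) (hy : y ∈ Set.Ioo 0 (1 - c^2/2)) :
    (0 ≤ (2 - c^2 - 2*y) / (1 - 2*κ + 2*κ*y)) ∧
    (0 ≤ (1 - 2*κ) / (2 - c^2)) ∧
    (Real.sqrt ((1 - 2*κ) * (2 - c^2 - 2*y) / ((2 - c^2) * (1 - 2*κ + 2*κ*y)))
        ∈ Set.Ioo (-1 : ℝ) 1) ∧
    HasDerivAt
      (fun z : ℝ =>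
        2 * Real.sqrt κ *
            Real.arctan (Real.sqrt κ * Real.sqrt ((2 - c^2 - 2*z) / (1 - 2*κ + 2*κ*z))) +
          2 * Real.sqrt ((1 - 2*κ) / (2 - c^2)) *
            _root_.artanh (Real.sqrt ((1 - 2*κ) * (2 - c^2 - 2*z) / ((2 - c^2) * (1 - 2*κ + 2*κ*z)))))
      (-(1/y) * Real.sqrt ((1 - 2*κ + 2*κ*y) / (2 - c^2 - 2*y))) y := by
  obtain ⟨hy0, hy1⟩ := hy
  have ha : 0 < 2 - c ^ 2 := by linarith
  have hb : 0 < 1 - 2 * κ := by linarith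
  have hN : 0 < 2 - c ^ 2 - 2 * y := by linarith
  have hD : 0 < 1 - 2 * κ + 2 * κ * y := by positivity
  exact ⟨div_nonneg hN.le hD.le, div_nonneg hb.le ha.le,
    sqrt_mul_div_mul_linear_mem_Ioo ha hb hκ0.le hy0,
    hasDerivAt_arctan_sqrt_add_artanh_sqrt ha hb hκ0.le hy0 hN⟩

/-- well-definedness of `F_{c,κ}` and its derivative. -/
theorem stmt_0 (c κ : ℝ) (hc0 : 0 ≤ c) (hc : c < Real.sqrt 2)
    (hκ0 : 0 < κ) (hκ : κ < 1/2) (y : ℝ) (hy : y ∈ Set.Ioo 0 (1 - c^2/2)) :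
    (0 ≤ (2 - c^2 - 2*y) / (1 - 2*κ + 2*κ*y)) ∧
    (0 ≤ (1 - 2*κ) / (2 - c^2)) ∧
    (Real.sqrt ((1 - 2*κ) * (2 - c^2 - 2*y) / ((2 - c^2) * (1 - 2*κ + 2*κ*y)))
        ∈ Set.Ioo (-1 : ℝ) 1) ∧
    HasDerivAt
      (fun z : ℝ =>
        2 * Real.sqrt κ *
            Real.arctan (Real.sqrt κ * Real.sqrt ((2 - c^2 - 2*z) / (1 - 2*κ + 2*κ*z))) +
          2 * Real.sqrt ((1 - 2*κ) / (2 - c^2)) *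
            _root_.artanh (Real.sqrt ((1 - 2*κ) * (2 - c^2 - 2*z) / ((2 - c^2) * (1 - 2*κ + 2*κ*z)))))
      (-(1/y) * Real.sqrt ((1 - 2*κ + 2*κ*y) / (2 - c^2 - 2*y))) y :=
  stmt_0_general c κ hκ0 hκ y hy
end

section
/- Let c ≥ 0, κ ∈ ℝ, and suppose η ∈ C²(ℝ) satisfies the first-order ODE (1−2κ+2κη)(η')² = η²(2−c²−2η) on ℝ and η tends to 0 at ±∞. If η attains a global extremum of |η| at the origin, then either η ≡ 0 on ℝ, or η(0) = 1 − c²/2. -/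
open Filter

-- No differentiability is assumed: where `f` is not differentiable, `deriv f a = 0` by convention.
theorem deriv_eq_zero_of_forall_abs_le {f : ℝ → ℝ} {a : ℝ} (hmax : ∀ x, |f x| ≤ |f a|)
    (ha : f a ≠ 0) : deriv f a = 0 := by
  rcases ha.lt_or_gt with hneg | hpos
  · refine IsLocalMin.deriv_eq_zero (Eventually.of_forall fun x => ?_)
    linarith [neg_abs_le (f x), hmax x, abs_of_neg hneg]
  · refine IsLocalMax.deriv_eq_zero (Eventually.of_forall fun x => ?_)
    linarith [le_abs_self (f x), hmax x, abs_of_pos hpos]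

theorem stmt_2_general (c κ : ℝ) (η : ℝ → ℝ)
    (hode : ∀ x : ℝ,
      (1 - 2*κ + 2*κ*η x) * (deriv η x)^2 = (η x)^2 * (2 - c^2 - 2*η x))
    (hmax : ∀ x : ℝ, |η x| ≤ |η 0|) :
    (∀ x : ℝ, η x = 0) ∨ η 0 = 1 - c^2/2 := by
  by_cases h0 : η 0 = 0
  · left
    intro x
    simpa [h0] using hmax x
  · right
    have hcrit := hode 0
    rw [deriv_eq_zero_of_forall_abs_le hmax h0] at hcrit
    have hfactor : 2 - c^2 - 2*η 0 = 0 := by simpa [h0] using hcrit.symm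
    linarith

/-- if `η ∈ C²(ℝ)` satisfies `(1-2κ+2κη)(η')² = η²(2-c²-2η)`,
tends to `0` at `±∞`, and `|η|` attains its global maximum at the origin,
then either `η ≡ 0` or `η(0) = 1 - c²/2`. -/
theorem stmt_2 (c κ : ℝ) (hc : 0 ≤ c) (η : ℝ → ℝ)
    (hreg : ContDiff ℝ 2 η)
    (hode : ∀ x : ℝ,
      (1 - 2*κ + 2*κ*η x) * (deriv η x)^2 = (η x)^2 * (2 - c^2 - 2*η x))
    (htop : Tendsto η atTop (nhds 0)) (hbot : Tendsto η atBot (nhds 0))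
    (hmax : ∀ x : ℝ, |η x| ≤ |η 0|) :
    (∀ x : ℝ, η x = 0) ∨ η 0 = 1 - c^2/2 :=
  stmt_2_general c κ η hode hmax
end

section
/- Let κ = 1/2 and 0 ≤ c < √2. The function η(x) = ((2−c²)/2)·cos²(x/√2) satisfies both equations: η·η'' + (η')²/2 = −3η² + (2−c²)η and η·(η')² = η²(2−c²−2η) on all of ℝ. -/
open Real

section CosSquare

variable (A k : ℝ)

theorem hasDerivAt_mul_cos_div_sq (x : ℝ) :
    HasDerivAt (fun x ↦ A * cos (x / k) ^ 2) (-(2 * A / k) * (sin (x / k) * cos (x / k))) x := by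
  have hcos := (hasDerivAt_cos (x / k)).comp x ((hasDerivAt_id' x).div_const k)
  refine ((hcos.pow 2).const_mul A).congr_deriv ?_
  simp only [Function.comp_apply]
  ring

theorem hasDerivAt_sin_mul_cos_div (B x : ℝ) :
    HasDerivAt (fun x ↦ B * (sin (x / k) * cos (x / k)))
      (B / k * (cos (x / k) ^ 2 - sin (x / k) ^ 2)) x := by
  have hx := (hasDerivAt_id' x).div_const k
  have hsin := (hasDerivAt_sin (x / k)).comp x hx
  have hcos := (hasDerivAt_cos (x / k)).comp x hx
  refine ((hsin.mul hcos).const_mul B).congr_deriv ?_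
  simp only [Function.comp_apply]
  ring

theorem deriv_mul_cos_div_sq :
    deriv (fun x ↦ A * cos (x / k) ^ 2) = fun x ↦ -(2 * A / k) * (sin (x / k) * cos (x / k)) :=
  funext fun x ↦ (hasDerivAt_mul_cos_div_sq A k x).deriv

theorem deriv_deriv_mul_cos_div_sq (x : ℝ) :
    deriv (deriv (fun x ↦ A * cos (x / k) ^ 2)) x =
      -(2 * A / k) / k * (cos (x / k) ^ 2 - sin (x / k) ^ 2) := by
  rw [deriv_mul_cos_div_sq]
  exact (hasDerivAt_sin_mul_cos_div k _ x).deriv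

variable {k}

theorem mul_cos_div_sq_second_order_eq (hk : k ^ 2 = 2) (x : ℝ) :
    let f := fun x ↦ A * cos (x / k) ^ 2
    f x * deriv (deriv f) x + deriv f x ^ 2 / 2 = -3 * f x ^ 2 + 2 * A * f x := by
  intro f
  have hk0 : k ≠ 0 := by rintro rfl; norm_num at hk
  simp only [f]
  rw [deriv_deriv_mul_cos_div_sq, deriv_mul_cos_div_sq]
  field_simp
  rw [hk]
  linear_combination 4 * A ^ 2 * cos (x / k) ^ 2 * sin_sq_add_cos_sq (x / k)

theorem mul_cos_div_sq_first_order_eq (hk : k ^ 2 = 2) (x : ℝ) :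
    let f := fun x ↦ A * cos (x / k) ^ 2
    f x * deriv f x ^ 2 = f x ^ 2 * (2 * A - 2 * f x) := by
  intro f
  have hk0 : k ≠ 0 := by rintro rfl; norm_num at hk
  simp only [f, deriv_mul_cos_div_sq]
  field_simp
  rw [hk]
  linear_combination 2 * A ^ 3 * cos (x / k) ^ 4 * sin_sq_add_cos_sq (x / k)

end CosSquare

theorem stmt_4_general (c : ℝ) :
    ∀ x : ℝ,
      (fun x : ℝ => (2 - c^2)/2 * Real.cos (x / Real.sqrt 2)^2) x *
          deriv (deriv (fun x : ℝ => (2 - c^2)/2 * Real.cos (x / Real.sqrt 2)^2)) x +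
        (deriv (fun x : ℝ => (2 - c^2)/2 * Real.cos (x / Real.sqrt 2)^2) x)^2 / 2 =
        -3 * ((fun x : ℝ => (2 - c^2)/2 * Real.cos (x / Real.sqrt 2)^2) x)^2 +
          (2 - c^2) * (fun x : ℝ => (2 - c^2)/2 * Real.cos (x / Real.sqrt 2)^2) x ∧
      (fun x : ℝ => (2 - c^2)/2 * Real.cos (x / Real.sqrt 2)^2) x *
          (deriv (fun x : ℝ => (2 - c^2)/2 * Real.cos (x / Real.sqrt 2)^2) x)^2 =
        ((fun x : ℝ => (2 - c^2)/2 * Real.cos (x / Real.sqrt 2)^2) x)^2 *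
          (2 - c^2 - 2 * (fun x : ℝ => (2 - c^2)/2 * Real.cos (x / Real.sqrt 2)^2) x) := by
  intro x
  have hk : sqrt 2 ^ 2 = 2 := sq_sqrt zero_le_two
  have hA : 2 * ((2 - c ^ 2) / 2) = 2 - c ^ 2 := by ring
  have second := mul_cos_div_sq_second_order_eq ((2 - c ^ 2) / 2) hk x
  have first := mul_cos_div_sq_first_order_eq ((2 - c ^ 2) / 2) hk x
  rw [hA] at second first
  exact ⟨second, first⟩

/-- for `κ = 1/2` and `0 ≤ c < √2`, the function
`η(x) = ((2-c²)/2)·cos²(x/√2)` satisfies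
`η·η'' + (η')²/2 = -3η² + (2-c²)η` and `η·(η')² = η²(2-c²-2η)` on `ℝ`. -/
theorem stmt_4 (c : ℝ) (hc0 : 0 ≤ c) (hc : c < Real.sqrt 2) :
    ∀ x : ℝ,
      (fun x : ℝ => (2 - c^2)/2 * Real.cos (x / Real.sqrt 2)^2) x *
          deriv (deriv (fun x : ℝ => (2 - c^2)/2 * Real.cos (x / Real.sqrt 2)^2)) x +
        (deriv (fun x : ℝ => (2 - c^2)/2 * Real.cos (x / Real.sqrt 2)^2) x)^2 / 2 =
        -3 * ((fun x : ℝ => (2 - c^2)/2 * Real.cos (x / Real.sqrt 2)^2) x)^2 +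
          (2 - c^2) * (fun x : ℝ => (2 - c^2)/2 * Real.cos (x / Real.sqrt 2)^2) x ∧
      (fun x : ℝ => (2 - c^2)/2 * Real.cos (x / Real.sqrt 2)^2) x *
          (deriv (fun x : ℝ => (2 - c^2)/2 * Real.cos (x / Real.sqrt 2)^2) x)^2 =
        ((fun x : ℝ => (2 - c^2)/2 * Real.cos (x / Real.sqrt 2)^2) x)^2 *
          (2 - c^2 - 2 * (fun x : ℝ => (2 - c^2)/2 * Real.cos (x / Real.sqrt 2)^2) x) :=
  stmt_4_general c
end

section
/- Define w(κ) = ((−4κ−1)/(4√(−κ)))·atanh(√(−2κ/(1−2κ))) − (3/2)·√((1−2κ)/2) for κ < 0. Then w is continuous on (−∞,0), w(κ) → +∞ as κ → −∞, w(κ) → −√2 as κ → 0⁻, and w is strictly decreasing on (−∞,0); hence w has a unique zero κ₀ ∈ (−∞,0). -/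
open Filter

noncomputable def w (κ : ℝ) : ℝ :=
  ((-4*κ - 1) / (4 * Real.sqrt (-κ))) * artanh (Real.sqrt (-2*κ / (1 - 2*κ)))
    - (3/2) * Real.sqrt ((1 - 2*κ) / 2)

/-
Substituting `y = √(-2κ)` turns `artanh √(-2κ/(1-2κ))` into `arsinh y`, and then
`w κ = v y / (2√2)` with `v y = (2y - 1/y) arsinh y - 3√(1+y²)`. The derivative of `v` is
`((2y² + 1) arsinh y - y√(1+y²)) / y²`, which is positive because
`arsinh y ≥ tanh (arsinh y) = y / √(1+y²)` (i.e. `x ≤ artanh x`) and `2y² + 1 > 1 + y²`.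
As `κ` runs up through `(-∞, 0)`, `y` runs down through `(0, ∞)`, so `w` is strictly decreasing.
The limits follow from `arsinh y / y → 1` as `y → 0⁺` and `arsinh y → ∞`, and the unique zero
from the intermediate value theorem.
-/

open Set Topology

theorem Real.self_le_artanh {x : ℝ} (h0 : 0 ≤ x) (h1 : x < 1) : x ≤ Real.artanh x := by
  have hsum := Real.hasSum_log_sub_log_of_abs_lt_one (abs_lt.2 ⟨by linarith, h1⟩)
  have hfirst := le_hasSum hsum 0 fun k _ => by positivity
  rw [Real.artanh_eq_half_log ⟨by linarith, h1.le⟩, Real.log_div (by linarith) (by linarith)]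
  norm_num at hfirst
  linarith

theorem Real.tanh_le_self {a : ℝ} (ha : 0 ≤ a) : Real.tanh a ≤ a := by
  have h0 : 0 ≤ Real.tanh a := by
    rw [Real.tanh_eq_sinh_div_cosh]
    exact div_nonneg (Real.sinh_nonneg_iff.2 ha) (Real.cosh_pos a).le
  simpa only [Real.artanh_tanh] using Real.self_le_artanh h0 (Real.tanh_lt_one a)

theorem Real.div_sqrt_one_add_sq_le_arsinh {y : ℝ} (hy : 0 ≤ y) :
    y / √(1 + y ^ 2) ≤ Real.arsinh y := by
  rw [← Real.tanh_arsinh]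
  exact Real.tanh_le_self (Real.arsinh_nonneg_iff.2 hy)

theorem artanh_eq_real_artanh {x : ℝ} (hx : x ∈ Icc (-1) 1) : artanh x = Real.artanh x := by
  rw [artanh, Real.artanh_eq_half_log hx]

theorem artanh_div_sqrt_one_add_sq (y : ℝ) : artanh (y / √(1 + y ^ 2)) = Real.arsinh y := by
  rw [← Real.tanh_arsinh,
    artanh_eq_real_artanh ⟨(Real.neg_one_lt_tanh _).le, (Real.tanh_lt_one _).le⟩, Real.artanh_tanh]

noncomputable def v (y : ℝ) : ℝ := (2 * y - y⁻¹) * Real.arsinh y - 3 * √(1 + y ^ 2)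

theorem w_eq_v {κ : ℝ} (hκ : κ < 0) : w κ = v √(-2 * κ) / (2 * √2) := by
  obtain ⟨y, hy, rfl⟩ : ∃ y > 0, κ = -y ^ 2 / 2 :=
    ⟨√(-2 * κ), Real.sqrt_pos.2 (by linarith), by rw [Real.sq_sqrt (by linarith)]; ring⟩
  have h1 : √(-2 * (-y ^ 2 / 2) / (1 - 2 * (-y ^ 2 / 2))) = y / √(1 + y ^ 2) := by
    rw [show -2 * (-y ^ 2 / 2) / (1 - 2 * (-y ^ 2 / 2)) = y ^ 2 / (1 + y ^ 2) by ring,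
      Real.sqrt_div' _ (by positivity), Real.sqrt_sq hy.le]
  have h2 : √(-(-y ^ 2 / 2)) = y / √2 := by
    rw [show -(-y ^ 2 / 2) = y ^ 2 / 2 by ring, Real.sqrt_div' _ (by norm_num), Real.sqrt_sq hy.le]
  have h3 : √((1 - 2 * (-y ^ 2 / 2)) / 2) = √(1 + y ^ 2) / √2 := by
    rw [Real.sqrt_div' _ (by norm_num)]; ring_nf
  have h4 : √(-2 * (-y ^ 2 / 2)) = y := by
    rw [show -2 * (-y ^ 2 / 2) = y ^ 2 by ring, Real.sqrt_sq hy.le]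
  rw [w, v, h1, h2, h3, h4, artanh_div_sqrt_one_add_sq]
  field_simp
  rw [Real.sq_sqrt (by norm_num)]
  ring

theorem hasDerivAt_v {y : ℝ} (hy : 0 < y) :
    HasDerivAt v (((2 * y ^ 2 + 1) * Real.arsinh y - y * √(1 + y ^ 2)) / y ^ 2) y := by
  have hsq : HasDerivAt (fun t => √(1 + t ^ 2)) (y / √(1 + y ^ 2)) y := by
    convert ((hasDerivAt_pow 2 y).const_add 1).sqrt (by positivity) using 1
    field_simp
    push_cast
    ring
  refine (((((hasDerivAt_id' y).const_mul 2).sub (hasDerivAt_inv hy.ne')).mul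
    (Real.hasDerivAt_arsinh y)).sub (hsq.const_mul 3)).congr_deriv ?_
  have hs2 : √(1 + y ^ 2) ^ 2 = 1 + y ^ 2 := Real.sq_sqrt (by positivity)
  simp only [Pi.sub_apply]
  field_simp
  linear_combination y * hs2

theorem continuousOn_v : ContinuousOn v (Ioi 0) := fun _ hy =>
  (hasDerivAt_v hy).continuousAt.continuousWithinAt

theorem strictMonoOn_v : StrictMonoOn v (Ioi 0) := by
  refine strictMonoOn_of_deriv_pos (convex_Ioi 0) continuousOn_v fun y hy => ?_
  rw [interior_Ioi] at hy
  have hy : 0 < y := hy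
  rw [(hasDerivAt_v hy).deriv]
  refine div_pos ?_ (by positivity)
  have hs : 0 < √(1 + y ^ 2) := by positivity
  have hs2 : √(1 + y ^ 2) ^ 2 = 1 + y ^ 2 := Real.sq_sqrt (by positivity)
  have key : (2 * y ^ 2 + 1) * (y / √(1 + y ^ 2)) ≤ (2 * y ^ 2 + 1) * Real.arsinh y :=
    mul_le_mul_of_nonneg_left (Real.div_sqrt_one_add_sq_le_arsinh hy.le) (by positivity)
  have hlt : y * √(1 + y ^ 2) < (2 * y ^ 2 + 1) * (y / √(1 + y ^ 2)) := by
    rw [mul_div_assoc', lt_div_iff₀ hs, mul_assoc, ← sq, hs2]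
    nlinarith [pow_pos hy 3]
  linarith

theorem tendsto_v_atTop : Tendsto v atTop atTop := by
  refine tendsto_atTop_mono' _ ?_ (tendsto_atTop_add_const_right _ (-3) tendsto_id)
  filter_upwards [eventually_ge_atTop (max 1 (Real.sinh 4))] with y hy
  have hy1 : 1 ≤ y := le_of_max_le_left hy
  have harsinh : 4 ≤ Real.arsinh y := by
    simpa only [Real.arsinh_sinh] using Real.arsinh_le_arsinh.2 (le_of_max_le_right hy)
  have hinv : y⁻¹ ≤ 1 := inv_le_one_of_one_le₀ hy1
  have hsqrt : √(1 + y ^ 2) ≤ y + 1 := Real.sqrt_le_left (by linarith) |>.2 (by nlinarith)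
  simp only [v, id]
  nlinarith

theorem tendsto_v_nhdsGT_zero : Tendsto v (𝓝[>] 0) (𝓝 (-4)) := by
  have hslope : Tendsto (fun t => t⁻¹ * Real.arsinh t) (𝓝[>] 0) (𝓝 1) := by
    simpa using (Real.hasDerivAt_arsinh 0).tendsto_slope_zero_right
  have hpoly : Tendsto (fun t : ℝ => 2 * t ^ 2 - 1) (𝓝[>] 0) (𝓝 (-1)) := by
    have hc : Continuous fun t : ℝ => 2 * t ^ 2 - 1 := by fun_prop
    simpa using (hc.tendsto 0).mono_left nhdsWithin_le_nhds
  have hsqrt : Tendsto (fun t : ℝ => √(1 + t ^ 2)) (𝓝[>] 0) (𝓝 1) := by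
    have hc : Continuous fun t : ℝ => √(1 + t ^ 2) := by fun_prop
    simpa using (hc.tendsto 0).mono_left nhdsWithin_le_nhds
  have hlim := (hpoly.mul hslope).sub (hsqrt.const_mul 3)
  rw [show (-1 : ℝ) * 1 - 3 * 1 = -4 by norm_num] at hlim
  refine hlim.congr' ?_
  filter_upwards [self_mem_nhdsWithin] with t (ht : 0 < t)
  simp only [v]
  field_simp

theorem continuousOn_w : ContinuousOn w (Iio 0) := by
  refine ContinuousOn.congr ?_ fun κ hκ => w_eq_v hκ
  refine (continuousOn_v.comp (by fun_prop) fun κ (hκ : κ < 0) => ?_).div_const _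
  exact Real.sqrt_pos.2 (by linarith)

theorem strictAntiOn_w : StrictAntiOn w (Iio 0) := by
  intro a (ha : a < 0) b (hb : b < 0) hab
  rw [w_eq_v ha, w_eq_v hb]
  refine div_lt_div_of_pos_right (strictMonoOn_v ?_ ?_ ?_) (by positivity)
  · exact Real.sqrt_pos.2 (by linarith)
  · exact Real.sqrt_pos.2 (by linarith)
  · exact Real.sqrt_lt_sqrt (by linarith) (by linarith)

theorem tendsto_w_atBot : Tendsto w atBot atTop := by
  have hsqrt : Tendsto (fun κ : ℝ => √(-2 * κ)) atBot atTop :=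
    Real.tendsto_sqrt_atTop.comp <| tendsto_id.const_mul_atBot_of_neg (by norm_num)
  have hc : (0 : ℝ) < 2 * √2 := by positivity
  refine ((tendsto_v_atTop.comp hsqrt).atTop_div_const hc).congr' ?_
  filter_upwards [eventually_lt_atBot 0] with κ hκ
  exact (w_eq_v hκ).symm

theorem tendsto_w_nhdsLT_zero : Tendsto w (𝓝[<] 0) (𝓝 (-√2)) := by
  have hsqrt : Tendsto (fun κ : ℝ => √(-2 * κ)) (𝓝[<] 0) (𝓝[>] 0) := by
    refine tendsto_nhdsWithin_iff.2 ⟨?_, ?_⟩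
    · have hc : Continuous fun κ : ℝ => √(-2 * κ) := by fun_prop
      simpa using (hc.tendsto 0).mono_left nhdsWithin_le_nhds
    · filter_upwards [self_mem_nhdsWithin] with κ (hκ : κ < 0)
      exact Real.sqrt_pos.2 (by linarith)
  have hval : -4 / (2 * √2) = -√2 := by
    field_simp
    rw [Real.sq_sqrt (by norm_num)]
    norm_num
  refine hval ▸ ((tendsto_v_nhdsGT_zero.comp hsqrt).div_const _).congr' ?_
  filter_upwards [self_mem_nhdsWithin] with κ hκ
  exact (w_eq_v hκ).symm

theorem existsUnique_zero_of_strictAntiOn_Iio {f : ℝ → ℝ} {b : ℝ}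
    (hcont : ContinuousOn f (Iio b)) (hanti : StrictAntiOn f (Iio b))
    (hbot : Tendsto f atBot atTop) (hneg : ∃ c < b, f c < 0) :
    ∃! x, x ∈ Iio b ∧ f x = 0 := by
  obtain ⟨c, hcb, hfc⟩ := hneg
  obtain ⟨a, hfa, hac⟩ := ((hbot.eventually_ge_atTop 0).and (eventually_le_atBot c)).exists
  have hsub : Icc a c ⊆ Iio b := fun x hx => hx.2.trans_lt hcb
  obtain ⟨x, hx, hfx⟩ := intermediate_value_Icc' hac (hcont.mono hsub) ⟨hfc.le, hfa⟩
  exact ⟨x, ⟨hsub hx, hfx⟩, fun y ⟨hy, hfy⟩ => hanti.injOn hy (hsub hx) (hfy.trans hfx.symm)⟩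

/-- `w` is continuous on `(-∞,0)`, `w → +∞` at `-∞`,
`w → -√2` as `κ → 0⁻`, `w` is strictly decreasing on `(-∞,0)`, and `w` has a
unique zero `κ₀ ∈ (-∞,0)`. -/
theorem stmt_14 :
    ContinuousOn w (Set.Iio (0:ℝ)) ∧
    Tendsto w atBot atTop ∧
    Tendsto w (nhdsWithin 0 (Set.Iio (0:ℝ))) (nhds (-Real.sqrt 2)) ∧
    StrictAntiOn w (Set.Iio (0:ℝ)) ∧
    ∃! κ₀ : ℝ, κ₀ ∈ Set.Iio (0:ℝ) ∧ w κ₀ = 0 := by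
  refine ⟨continuousOn_w, tendsto_w_atBot, tendsto_w_nhdsLT_zero, strictAntiOn_w,
    existsUnique_zero_of_strictAntiOn_Iio continuousOn_w strictAntiOn_w tendsto_w_atBot ?_⟩
  obtain ⟨κ, hwκ, hκ⟩ := ((tendsto_w_nhdsLT_zero.eventually_lt_const
    (neg_lt_zero.2 (by positivity))).and self_mem_nhdsWithin).exists
  exact ⟨κ, hκ, hwκ⟩
end

section
/- Let c > 0, κ ∈ ℝ, and let η ∈ C²(ℝ) be a solution of the pair of equations (1−2κ+2κη)η'' + κ(η')² = −3η² + (2−c²)η and (1−2κ+2κη)(η')² = η²(2−c²−2η) on ℝ. Then η(x) < 1 for all x ∈ ℝ. -/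
/-!
On the level set `η = 1` the first-order equation reads `(η')² = -c² < 0`, so `η` never takes
the value `1`; if `η ≥ 1` somewhere, then `η > 1` everywhere. There the right-hand side is at
most `-c²`, so `η'` never vanishes and, by Darboux, has a constant sign. On the half-line where
`1 < η ≤ M` the coefficient `1 - 2κ + 2κη` is bounded by `1 + 2|κ|(M - 1)`, which bounds `|η'|`
away from `0`; following that half-line, `η` drops below `1` in finite time.
-/

open Set

lemma lt_of_forall_ne_of_lt {X α : Type*} [TopologicalSpace X] [PreconnectedSpace X]
    [LinearOrder α] [TopologicalSpace α] [OrderClosedTopology α] {f : X → α} (hf : Continuous f)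
    {a : α} (hne : ∀ x, f x ≠ a) {x₀ : X} (hx₀ : a < f x₀) (y : X) : a < f y := by
  by_contra! hy
  obtain ⟨z, hz⟩ := intermediate_value_univ y x₀ hf ⟨hy, hx₀.le⟩
  exact hne z hz

lemma exists_lt_of_pos_le_deriv_Iic {f : ℝ → ℝ} (hf : Differentiable ℝ f) {k a : ℝ}
    (hk : 0 < k) (hf' : ∀ x ≤ a, k ≤ deriv f x) (b : ℝ) : ∃ x, f x < b := by
  set x := a - |f a - b| / k - 1
  have hxa : x ≤ a := by
    have : 0 ≤ |f a - b| / k := by positivity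
    linarith
  have hgrowth : k * (a - x) ≤ f a - f x :=
    (convex_Iic a).mul_sub_le_image_sub_of_le_deriv hf.continuous.continuousOn
      hf.differentiableOn (by simpa using fun y (hy : y < a) => hf' y hy.le)
      x hxa a (mem_Iic.2 le_rfl) hxa
  have hkx : k * (a - x) = |f a - b| + k := by simp only [x]; field_simp; ring
  exact ⟨x, by linarith [le_abs_self (f a - b)]⟩

lemma le_mul_abs_of_first_integral {c κ e d M : ℝ} (hc : 0 ≤ c) (he : 1 < e) (heM : e ≤ M)
    (h : (1 - 2*κ + 2*κ*e) * d^2 = e^2 * (2 - c^2 - 2*e)) :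
    c ≤ (1 + 2 * |κ| * (M - 1)) * |d| := by
  set B := 1 + 2 * |κ| * (M - 1)
  have hB : 1 ≤ B := by have := abs_nonneg κ; nlinarith
  have hcoeff : |1 - 2*κ + 2*κ*e| ≤ B := by
    calc |1 - 2*κ + 2*κ*e| = |1 + 2*κ*(e - 1)| := by ring_nf
      _ ≤ 1 + 2 * |κ| * (e - 1) := by
        simpa [abs_mul, abs_of_pos (sub_pos.2 he)] using abs_add_le 1 (2*κ*(e - 1))
      _ ≤ B := by have := abs_nonneg κ; nlinarith
  have hrhs : e^2 * (2 - c^2 - 2*e) ≤ -c^2 := by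
    have he2 : 1 ≤ e^2 := by nlinarith
    nlinarith [mul_nonneg (sub_nonneg.2 he2) (sq_nonneg c),
      mul_nonneg (sq_nonneg e) (sub_pos.2 he).le]
  have hsq : c^2 ≤ (B * |d|)^2 :=
    calc c^2 ≤ |1 - 2*κ + 2*κ*e| * d^2 := by nlinarith [neg_abs_le (1 - 2*κ + 2*κ*e), sq_nonneg d]
      _ ≤ B * d^2 := by gcongr
      _ ≤ (B * |d|)^2 := by
        rw [mul_pow, sq_abs]
        nlinarith [mul_le_mul_of_nonneg_right hB (sq_nonneg d)]
  exact (pow_le_pow_iff_left₀ hc (by positivity) two_ne_zero).1 hsq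

lemma false_of_one_lt_of_deriv_pos {c κ : ℝ} (hc : 0 < c) {η : ℝ → ℝ} (hη : Differentiable ℝ η)
    (hode : ∀ x, (1 - 2*κ + 2*κ*η x) * (deriv η x)^2 = (η x)^2 * (2 - c^2 - 2*η x))
    (hgt : ∀ x, 1 < η x) (hpos : ∀ x, 0 < deriv η x) : False := by
  set B := 1 + 2 * |κ| * (η 0 - 1)
  have hB : 0 < B := by have := abs_nonneg κ; nlinarith [hgt 0]
  have hslope : ∀ x ≤ 0, c / B ≤ deriv η x := fun x hx => by
    rw [div_le_iff₀' hB]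
    simpa [abs_of_pos (hpos x)] using le_mul_abs_of_first_integral hc.le (hgt x)
      ((strictMono_of_deriv_pos hpos).monotone hx) (hode x)
  obtain ⟨x, hx⟩ := exists_lt_of_pos_le_deriv_Iic hη (div_pos hc hB) hslope 1
  exact (hgt x).not_gt hx

theorem stmt_17_general (c κ : ℝ) (hc : 0 < c) (η : ℝ → ℝ)
    (hreg : ContDiff ℝ 2 η)
    (hode1 : ∀ x : ℝ,
      (1 - 2*κ + 2*κ*η x) * (deriv η x)^2 = (η x)^2 * (2 - c^2 - 2*η x)) :
    ∀ x : ℝ, η x < 1 := by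
  have hη : Differentiable ℝ η := hreg.differentiable (by norm_num)
  have hne : ∀ x, η x ≠ 1 := fun x hx => by
    have := hode1 x
    rw [hx] at this
    nlinarith [sq_nonneg (deriv η x), sq_pos_of_pos hc]
  intro x
  by_contra! hx
  have hgt : ∀ y, 1 < η y := lt_of_forall_ne_of_lt hη.continuous hne (hx.lt_of_ne' (hne x))
  have hderiv_ne : ∀ y, deriv η y ≠ 0 := fun y h0 => by
    have := le_mul_abs_of_first_integral hc.le (hgt y) le_rfl (hode1 y)
    simp only [h0, abs_zero, mul_zero] at this
    exact this.not_gt hc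
  rcases hasDerivWithinAt_forall_lt_or_forall_gt_of_forall_ne convex_univ
    (fun y _ => (hη y).hasDerivAt.hasDerivWithinAt) (fun y _ => hderiv_ne y) with hneg | hpos
  · refine false_of_one_lt_of_deriv_pos (κ := κ) (η := fun y => η (-y)) hc
      (hη.comp differentiable_neg) (fun y => ?_)
      (fun y => hgt (-y)) (fun y => ?_)
    · simpa only [deriv_comp_neg, neg_sq] using hode1 (-y)
    · simpa only [deriv_comp_neg, Left.neg_pos_iff] using hneg (-y) (mem_univ _)
  · exact false_of_one_lt_of_deriv_pos hc hη hode1 hgt fun y => hpos y (mem_univ _)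

/-- if `c > 0` and `η ∈ C²(ℝ)` solves both
`(1-2κ+2κη)η'' + κ(η')² = -3η² + (2-c²)η` and
`(1-2κ+2κη)(η')² = η²(2-c²-2η)` on `ℝ`, then `η < 1` everywhere. -/
theorem stmt_17 (c κ : ℝ) (hc : 0 < c) (η : ℝ → ℝ)
    (hreg : ContDiff ℝ 2 η)
    (hode2 : ∀ x : ℝ,
      (1 - 2*κ + 2*κ*η x) * deriv (deriv η) x + κ*(deriv η x)^2 =
        -3*(η x)^2 + (2 - c^2)*η x)
    (hode1 : ∀ x : ℝ,
      (1 - 2*κ + 2*κ*η x) * (deriv η x)^2 = (η x)^2 * (2 - c^2 - 2*η x)) :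
    ∀ x : ℝ, η x < 1 :=
  stmt_17_general c κ hc η hreg hode1
end
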